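/- Let X be a connected graph with basepoint x₀. Let α: x₀ → x and β: x₀ → x′ be paths, let e be an edge with s(e) = x, let f be an edge with s(f) = x′, and let t, u ∈ (0,1). If c_α + t·e = c_β + u·f in C₁(X,ℝ), then either f = e, u = t and α is homologous to β, or f = e⁻¹, u = 1 − t and the path αe is homologous to β. -/

import Mathlib

/-- A graph in the sense of Sunada's topological crystallography: a set of vertices,
a set of edges, source and target maps, and a fixed-point free involution sending
each edge to its inverse. -/
structure SunadaGraph where
  V : Type
  E : Type
  s : E → V
  t : E → V
  inv : E → E
  s_inv : ∀ e, s (inv e) = t e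
  t_inv : ∀ e, t (inv e) = s e
  inv_inv : ∀ e, inv (inv e) = e
  inv_ne : ∀ e, inv e ≠ e

namespace SunadaGraph

variable (X : SunadaGraph)

/-- `X.IsPath x y γ` : the word of edges `γ` is a path from `x` to `y` in `X`. -/
inductive IsPath : X.V → X.V → List X.E → Prop
  | nil (x : X.V) : IsPath x x []
  | cons (e : X.E) {y : X.V} {γ : List X.E} (h : IsPath (X.t e) y γ) :
      IsPath (X.s e) y (e :: γ)

/-- A graph is connected if any two vertices are joined by a path. -/
def Connected : Prop := ∀ x y : X.V, ∃ γ : List X.E, X.IsPath x y γ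

/-- An edge is a bridge if there is no path from its target to its source
avoiding both the edge and its inverse. -/
def IsBridge (e : X.E) : Prop :=
  ¬ ∃ γ : List X.E, X.IsPath (X.t e) (X.s e) γ ∧ e ∉ γ ∧ X.inv e ∉ γ

/-- The space `C₁(X,ℝ)` of real 1-chains: formal linear combinations of edges
with `e⁻¹ = -e`, realized as finitely supported functions `c : E → ℝ` with
`c(e⁻¹) = - c(e)`. -/
noncomputable def C1 : Submodule ℝ (X.E →₀ ℝ) where
  carrier := {c | ∀ e, c (X.inv e) = - c e}
  add_mem' := by
    intro a b ha hb e
    simp only [Finsupp.add_apply, ha e, hb e]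
    ring
  zero_mem' := by intro e; simp
  smul_mem' := by
    intro r c hc e
    simp only [Finsupp.smul_apply, hc e, smul_eq_mul]
    ring

/-- The 1-chain associated to a single edge. -/
noncomputable def edgeChain (e : X.E) : ↥X.C1 :=
  ⟨Finsupp.single e 1 - Finsupp.single (X.inv e) 1, by
    intro f
    classical
    have h1 : (e = X.inv f) ↔ (X.inv e = f) := by
      constructor
      · rintro rfl; exact X.inv_inv f
      · rintro rfl; exact (X.inv_inv e).symm
    have h2 : (X.inv e = X.inv f) ↔ (e = f) := by
      constructor
      · intro h
        have := congrArg X.inv h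
        rwa [X.inv_inv, X.inv_inv] at this
      · rintro rfl; rfl
    simp only [Finsupp.sub_apply, Finsupp.single_apply, h1, h2]
    ring⟩

/-- The 1-chain `c_γ` of a path `γ`. -/
noncomputable def pathChain (γ : List X.E) : ↥X.C1 := (γ.map X.edgeChain).sum

/-- The inner product on `C₁(X,ℝ)` for which the edges form an orthonormal basis
(with `e⁻¹` counting as the negative of `e`). -/
noncomputable def chainInner (c d : ↥X.C1) : ℝ :=
  (1/2) * ((c : X.E →₀ ℝ).sum fun e x => x * (d : X.E →₀ ℝ) e)

/-- The boundary of a 1-chain. -/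
noncomputable def boundary (c : ↥X.C1) : X.V →₀ ℝ :=
  (c : X.E →₀ ℝ).sum fun e x => x • (Finsupp.single (X.t e) (1:ℝ) - Finsupp.single (X.s e) 1)

/-- A 1-cycle is a 1-chain with vanishing boundary. -/
def IsCycle (c : ↥X.C1) : Prop := X.boundary c = 0

/-- An integral 1-chain: all coefficients are integers. -/
def IsIntegral (c : ↥X.C1) : Prop := ∀ e, ∃ n : ℤ, (c : X.E →₀ ℝ) e = (n : ℝ)

/-- The support of a 1-chain: the set of edges with positive coefficient. -/
def chainSupp (c : ↥X.C1) : Set X.E := {e | 0 < (c : X.E →₀ ℝ) e}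

/-- `p` is the orthogonal projection of `C₁(X,ℝ)` onto the space `Z₁(X,ℝ)` of 1-cycles:
it takes values in `Z₁(X,ℝ)` and `c - p c` is orthogonal to every 1-cycle. -/
def IsOrthoProj (p : ↥X.C1 → ↥X.C1) : Prop :=
  (∀ c, X.IsCycle (p c)) ∧ (∀ c z, X.IsCycle z → X.chainInner (c - p c) z = 0)

/-- Two paths from `x` to `y` are homologous if one can be obtained from the other
by repeatedly inserting or deleting subwords `e e⁻¹`, and/or replacing a subword
`στ` by `τσ` where `σ` and `τ` are loops based at the same vertex. -/
inductive Homologous : X.V → X.V → List X.E → List X.E → Prop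
  | refl {x y : X.V} (γ : List X.E) (h : X.IsPath x y γ) : Homologous x y γ γ
  | cancel {x y : X.V} (γ δ : List X.E) (e : X.E)
      (h : X.IsPath x y (γ ++ e :: X.inv e :: δ)) (h' : X.IsPath x y (γ ++ δ)) :
      Homologous x y (γ ++ e :: X.inv e :: δ) (γ ++ δ)
  | swap {x y : X.V} (γ σ τ δ : List X.E) (v : X.V)
      (hσ : X.IsPath v v σ) (hτ : X.IsPath v v τ)
      (h : X.IsPath x y (γ ++ (σ ++ (τ ++ δ))))
      (h' : X.IsPath x y (γ ++ (τ ++ (σ ++ δ)))) :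
      Homologous x y (γ ++ (σ ++ (τ ++ δ))) (γ ++ (τ ++ (σ ++ δ)))
  | symm {x y : X.V} {a b : List X.E} (h : Homologous x y a b) : Homologous x y b a
  | trans {x y : X.V} {a b c : List X.E} (h1 : Homologous x y a b)
      (h2 : Homologous x y b c) : Homologous x y a c

/-- A simple path: no vertex is visited twice. -/
def IsSimplePath (x y : X.V) (γ : List X.E) : Prop :=
  X.IsPath x y γ ∧ (x :: γ.map X.t).Nodup

/-- A simple loop based at `x`: a loop in which every vertex other than `x` occurs
at most once and `x` occurs only as the initial and final vertex. -/
def IsSimpleLoop (x : X.V) (γ : List X.E) : Prop :=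
  X.IsPath x x γ ∧ (x :: (γ.map X.t).dropLast).Nodup

/-- A reduced word: no subword of the form `e e⁻¹`. -/
def Reduced (γ : List X.E) : Prop := γ.Chain' (fun a b => b ≠ X.inv a)

/-- A spanning tree: a set of edges, closed under inversion, such that the spanning
subgraph it determines is connected and has no nonempty reduced loops. -/
def IsSpanningTree (S : Set X.E) : Prop :=
  (∀ e ∈ S, X.inv e ∈ S) ∧
  (∀ x y : X.V, ∃ γ : List X.E, X.IsPath x y γ ∧ ∀ e ∈ γ, e ∈ S) ∧
  (∀ (x : X.V) (γ : List X.E), X.IsPath x x γ → (∀ e ∈ γ, e ∈ S) → X.Reduced γ → γ = [])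

/-- The quotient of a set of 1-chains by the translation action of the
integral 1-cycles. -/
def transQuot (S : Set ↥X.C1) : Type :=
  Quot (fun a b : S => ∃ z : ↥X.C1, X.IsCycle z ∧ X.IsIntegral z ∧ (b : ↥X.C1) = (a : ↥X.C1) + z)

end SunadaGraph

/-!
Fix paths `q y : x₀ → y` with `q x₀` empty. Inserting `(q y)⁻¹ (q y)` at every vertex `y` of a
loop `γ` at `x₀` shows that `γ` is homologous to the product of the loops `q(s g) g q(t g)⁻¹`
over its edges `g`. If the chain of `γ` vanishes, its edges pair off with their inverses; as loops
at `x₀` may be swapped, the two loops of each pair can be brought together, where they cancel.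
Applied to `αβ⁻¹`, this shows that paths with the same ends and the same chain are homologous.
Finally, path chains are integral, so comparing the coefficients of `e` in `c_α + t·e = c_β + u·f`
with `t, u ∈ (0,1)` forces `f = e, u = t` or `f = e⁻¹, u = 1 - t`.
-/

theorem Int.eq_of_abs_cast_sub_lt_one {R : Type*} [Ring R] [LinearOrder R] [IsStrictOrderedRing R]
    {m n : ℤ} (h : |(m : R) - n| < 1) : m = n := by
  rw [← sub_eq_zero, ← Int.abs_lt_one_iff]
  exact_mod_cast h

namespace SunadaGraph

variable {X : SunadaGraph}

theorem IsPath.append {x y z : X.V} {a b : List X.E} (ha : X.IsPath x y a)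
    (hb : X.IsPath y z b) : X.IsPath x z (a ++ b) := by
  induction ha with
  | nil => exact hb
  | cons e _ ih => exact .cons e (ih hb)

theorem isPath_singleton (e : X.E) : X.IsPath (X.s e) (X.t e) [e] := .cons e (.nil _)

theorem isPath_singleton_inv (e : X.E) : X.IsPath (X.t e) (X.s e) [X.inv e] := by
  simpa only [X.s_inv, X.t_inv] using isPath_singleton (X.inv e)

theorem IsPath.cons_inv {e : X.E} {z : X.V} {γ : List X.E} (h : X.IsPath (X.s e) z γ) :
    X.IsPath (X.t e) z (X.inv e :: γ) :=
  (isPath_singleton_inv e).append h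

def pathInv (X : SunadaGraph) (γ : List X.E) : List X.E := (γ.map X.inv).reverse

theorem pathInv_cons (e : X.E) (γ : List X.E) :
    X.pathInv (e :: γ) = X.pathInv γ ++ [X.inv e] := by
  simp [pathInv]

theorem pathInv_pathInv (γ : List X.E) : X.pathInv (X.pathInv γ) = γ := by
  simp [pathInv, List.map_reverse, Function.comp_def, X.inv_inv]

theorem IsPath.pathInv {x y : X.V} {γ : List X.E} (h : X.IsPath x y γ) :
    X.IsPath y x (X.pathInv γ) := by
  induction h with
  | nil => exact .nil _
  | cons e _ ih => rw [pathInv_cons]; exact ih.append (isPath_singleton_inv e)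

instance {x y : X.V} : Trans (X.Homologous x y) (X.Homologous x y) (X.Homologous x y) :=
  ⟨.trans⟩

theorem Homologous.append_append {w x y z : X.V} {P S a b : List X.E}
    (h : X.Homologous x y a b) (hP : X.IsPath w x P) (hS : X.IsPath y z S) :
    X.Homologous w z (P ++ a ++ S) (P ++ b ++ S) := by
  induction h with
  | refl γ h => exact .refl _ ((hP.append h).append hS)
  | cancel γ δ e h h' =>
    simpa using Homologous.cancel (P ++ γ) (δ ++ S) e
      (by simpa using (hP.append h).append hS) (by simpa using (hP.append h').append hS)
  | swap γ σ τ δ v hσ hτ h h' =>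
    simpa using Homologous.swap (P ++ γ) σ τ (δ ++ S) v hσ hτ
      (by simpa using (hP.append h).append hS) (by simpa using (hP.append h').append hS)
  | symm _ ih => exact ih.symm
  | trans _ _ ih₁ ih₂ => exact ih₁.trans ih₂

theorem homologous_insert_append_pathInv {w x y z : X.V} {A D P : List X.E}
    (hA : X.IsPath w x A) (hD : X.IsPath x z D) (hP : X.IsPath x y P) :
    X.Homologous w z (A ++ D) (A ++ (P ++ X.pathInv P) ++ D) := by
  induction hP generalizing A D with
  | nil => simpa [pathInv] using Homologous.refl _ (hA.append hD)
  | cons p _ ih =>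
    calc X.Homologous w z (A ++ D) (A ++ p :: X.inv p :: D) :=
          .symm (.cancel A D p (hA.append (.cons p hD.cons_inv)) (hA.append hD))
      _ = (A ++ [p]) ++ (X.inv p :: D) := by simp
      X.Homologous w z _ ((A ++ [p]) ++ (_ ++ X.pathInv _) ++ (X.inv p :: D)) :=
          ih (hA.append (isPath_singleton p)) hD.cons_inv
      _ = A ++ ((p :: _) ++ X.pathInv (p :: _)) ++ D := by simp [pathInv_cons]

theorem homologous_append_pathInv_nil {x y : X.V} {P : List X.E} (hP : X.IsPath x y P) :
    X.Homologous x x (P ++ X.pathInv P) [] := by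
  simpa using (homologous_insert_append_pathInv (.nil x) (.nil x) hP).symm

theorem pathChain_nil : X.pathChain [] = 0 := rfl

theorem pathChain_cons (e : X.E) (l : List X.E) :
    X.pathChain (e :: l) = X.edgeChain e + X.pathChain l := by
  simp [pathChain]

theorem pathChain_append (a b : List X.E) :
    X.pathChain (a ++ b) = X.pathChain a + X.pathChain b := by
  simp [pathChain]

theorem edgeChain_inv (e : X.E) : X.edgeChain (X.inv e) = -X.edgeChain e := by
  ext1
  simp only [edgeChain, X.inv_inv, Submodule.coe_neg]
  abel

theorem pathChain_pathInv (γ : List X.E) : X.pathChain (X.pathInv γ) = -X.pathChain γ := by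
  induction γ with
  | nil => exact (neg_zero (G := X.C1)).symm
  | cons e γ ih =>
    rw [pathInv_cons, pathChain_append, ih, pathChain_cons, pathChain_cons, pathChain_nil,
      edgeChain_inv]
    abel

theorem edgeChain_apply [DecidableEq X.E] (g h : X.E) :
    (X.edgeChain g : X.E →₀ ℝ) h = (if g = h then 1 else 0) - (if g = X.inv h then 1 else 0) := by
  have hinv : X.inv g = h ↔ g = X.inv h :=
    ⟨fun h' => h' ▸ (X.inv_inv g).symm, fun h' => h' ▸ X.inv_inv h⟩
  simp only [edgeChain, Finsupp.coe_sub, Pi.sub_apply, Finsupp.single_apply, hinv]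

theorem edgeChain_apply_self (e : X.E) : (X.edgeChain e : X.E →₀ ℝ) e = 1 := by
  classical
  simp [edgeChain_apply, (X.inv_ne e).symm]

theorem edgeChain_inv_apply_self (e : X.E) : (X.edgeChain (X.inv e) : X.E →₀ ℝ) e = -1 := by
  simp [edgeChain_inv, edgeChain_apply_self]

theorem edgeChain_apply_of_ne {f e : X.E} (hfe : f ≠ e) (hfe' : f ≠ X.inv e) :
    (X.edgeChain f : X.E →₀ ℝ) e = 0 := by
  classical
  simp [edgeChain_apply, hfe, hfe']

theorem pathChain_apply [DecidableEq X.E] (l : List X.E) (h : X.E) :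
    (X.pathChain l : X.E →₀ ℝ) h = l.count h - l.count (X.inv h) := by
  induction l with
  | nil => simp [pathChain_nil]
  | cons g l ih =>
    rw [pathChain_cons, Submodule.coe_add, Finsupp.add_apply, ih, edgeChain_apply]
    simp only [List.count_cons, beq_iff_eq]
    push_cast
    ring

theorem isIntegral_pathChain (l : List X.E) : X.IsIntegral (X.pathChain l) := by
  classical
  exact fun h => ⟨l.count h - l.count (X.inv h), by simp [pathChain_apply]⟩

theorem inv_mem_of_pathChain_cons_eq_zero {g : X.E} {l : List X.E}
    (h : X.pathChain (g :: l) = 0) : X.inv g ∈ l := by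
  classical
  have hcoeff := congrArg (fun c : X.C1 => (c : X.E →₀ ℝ) g) h
  simp only [pathChain_apply, ZeroMemClass.coe_zero, Finsupp.coe_zero, Pi.zero_apply,
    sub_eq_zero, Nat.cast_inj] at hcoeff
  have hpos : 0 < (g :: l).count (X.inv g) := hcoeff ▸ List.count_pos_iff.mpr List.mem_cons_self
  exact (List.mem_cons.mp (List.count_pos_iff.mp hpos)).resolve_left (X.inv_ne g)

section EdgeLoops

variable {v : X.V} {q : X.V → List X.E}

def edgeLoop (q : X.V → List X.E) (g : X.E) : List X.E := q (X.s g) ++ g :: X.pathInv (q (X.t g))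

theorem isPath_edgeLoop (hq : ∀ y, X.IsPath v y (q y)) (g : X.E) :
    X.IsPath v v (edgeLoop q g) :=
  (hq (X.s g)).append (.cons g (hq (X.t g)).pathInv)

theorem isPath_flatMap_edgeLoop (hq : ∀ y, X.IsPath v y (q y)) (l : List X.E) :
    X.IsPath v v (l.flatMap (edgeLoop q)) := by
  induction l with
  | nil => exact .nil v
  | cons g l ih => exact (isPath_edgeLoop hq g).append ih

theorem homologous_flatMap_edgeLoop (hq : ∀ y, X.IsPath v y (q y)) (hqv : q v = [])
    {w : X.V} {R : List X.E} (hR : X.IsPath w v R) :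
    X.Homologous v v (q w ++ R) (R.flatMap (edgeLoop q)) := by
  induction R generalizing w with
  | nil => cases hR; simpa [hqv] using Homologous.refl [] (.nil v)
  | cons r R ih =>
    obtain _ | ⟨_, hR⟩ := hR
    calc X.Homologous v v (q (X.s r) ++ r :: R)
          ((q (X.s r) ++ [r]) ++ (X.pathInv (q (X.t r)) ++ X.pathInv (X.pathInv (q (X.t r))))
            ++ R) := by
          simpa using homologous_insert_append_pathInv ((hq (X.s r)).append (isPath_singleton r))
            hR (hq (X.t r)).pathInv
      _ = edgeLoop q r ++ (q (X.t r) ++ R) ++ [] := by simp [edgeLoop, pathInv_pathInv]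
      X.Homologous v v _ (edgeLoop q r ++ R.flatMap (edgeLoop q) ++ []) :=
          (ih hR).append_append (isPath_edgeLoop hq r) (.nil v)
      _ = (r :: R).flatMap (edgeLoop q) := by simp

theorem homologous_edgeLoop_append_edgeLoop_inv (hq : ∀ y, X.IsPath v y (q y)) (g : X.E) :
    X.Homologous v v (edgeLoop q g ++ edgeLoop q (X.inv g)) [] := by
  have hA : X.IsPath v (X.t g) (q (X.s g) ++ [g]) := (hq (X.s g)).append (isPath_singleton g)
  have hD : X.IsPath (X.t g) v (X.inv g :: X.pathInv (q (X.s g))) := (hq (X.s g)).pathInv.cons_inv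
  calc X.Homologous v v _
        ((q (X.s g) ++ [g]) ++ (X.inv g :: X.pathInv (q (X.s g)))) := by
        simpa [edgeLoop, pathInv_pathInv, X.s_inv, X.t_inv] using
          (homologous_insert_append_pathInv hA hD (hq (X.t g)).pathInv).symm
    _ = q (X.s g) ++ g :: X.inv g :: X.pathInv (q (X.s g)) := by simp
    X.Homologous v v _ (q (X.s g) ++ X.pathInv (q (X.s g))) :=
        .cancel _ _ g ((hq (X.s g)).append (.cons g hD)) ((hq (X.s g)).append (hq (X.s g)).pathInv)
    X.Homologous v v _ [] := homologous_append_pathInv_nil (hq (X.s g))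

theorem homologous_flatMap_edgeLoop_nil (hq : ∀ y, X.IsPath v y (q y)) :
    ∀ l : List X.E, X.pathChain l = 0 → X.Homologous v v (l.flatMap (edgeLoop q)) []
  | [] => fun _ => .refl [] (.nil v)
  | g :: l => fun hl => by
    obtain ⟨l₁, l₂, rfl⟩ := List.append_of_mem (inv_mem_of_pathChain_cons_eq_zero hl)
    have hl' : X.pathChain (l₁ ++ l₂) = 0 := by
      rw [← hl, pathChain_cons, pathChain_append, pathChain_append, pathChain_cons,
        edgeChain_inv]
      abel
    have hloops := isPath_flatMap_edgeLoop hq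
    calc (g :: (l₁ ++ X.inv g :: l₂)).flatMap (edgeLoop q)
      _ = edgeLoop q g ++ (l₁.flatMap (edgeLoop q) ++
          (edgeLoop q (X.inv g) ++ l₂.flatMap (edgeLoop q))) := by simp
      X.Homologous v v _ (edgeLoop q g ++ (edgeLoop q (X.inv g) ++
          (l₁.flatMap (edgeLoop q) ++ l₂.flatMap (edgeLoop q)))) :=
          .swap _ _ _ _ v (hloops l₁) (isPath_edgeLoop hq (X.inv g))
            (by simpa using hloops (g :: (l₁ ++ X.inv g :: l₂)))
            (by simpa using hloops (g :: X.inv g :: (l₁ ++ l₂)))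
      _ = [] ++ (edgeLoop q g ++ edgeLoop q (X.inv g)) ++ (l₁ ++ l₂).flatMap (edgeLoop q) := by
          simp
      X.Homologous v v _ ([] ++ [] ++ (l₁ ++ l₂).flatMap (edgeLoop q)) :=
          (homologous_edgeLoop_append_edgeLoop_inv hq g).append_append (.nil v) (hloops _)
      X.Homologous v v _ [] := by
          simpa using homologous_flatMap_edgeLoop_nil hq (l₁ ++ l₂) hl'
termination_by l => l.length
decreasing_by simp_all

end EdgeLoops

theorem homologous_of_pathChain_eq (hconn : X.Connected) {x₀ x : X.V} {α β : List X.E}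
    (hα : X.IsPath x₀ x α) (hβ : X.IsPath x₀ x β) (hc : X.pathChain α = X.pathChain β) :
    X.Homologous x₀ x α β := by
  classical
  let q : X.V → List X.E := Function.update (fun y => (hconn x₀ y).choose) x₀ []
  have hq : ∀ y, X.IsPath x₀ y (q y) := by
    intro y
    by_cases hy : y = x₀
    · subst hy; simpa [q] using IsPath.nil y
    · simpa [q, hy] using (hconn x₀ y).choose_spec
  have hqx₀ : q x₀ = [] := by simp [q]
  have hloop : X.IsPath x₀ x₀ (α ++ X.pathInv β) := hα.append hβ.pathInv
  have hnull : X.pathChain (α ++ X.pathInv β) = 0 := by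
    rw [pathChain_append, pathChain_pathInv, hc]
    abel
  have hloop_null : X.Homologous x₀ x₀ (α ++ X.pathInv β) [] := by
    simpa [hqx₀] using (homologous_flatMap_edgeLoop hq hqx₀ hloop).trans
      (homologous_flatMap_edgeLoop_nil hq _ hnull)
  calc X.Homologous x₀ x α ([] ++ (α ++ X.pathInv β) ++ β) := by
        simpa [pathInv_pathInv] using
          homologous_insert_append_pathInv (D := []) hα (.nil x) hβ.pathInv
    X.Homologous x₀ x _ ([] ++ [] ++ β) := hloop_null.append_append (.nil x₀) hβ
    _ = β := rfl

theorem eq_and_eq_or_eq_inv_and_eq_one_sub_of_pathChain_add_smul_eq {α β : List X.E}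
    {e f : X.E} {t u : ℝ} (ht : t ∈ Set.Ioo (0 : ℝ) 1) (hu : u ∈ Set.Ioo (0 : ℝ) 1)
    (heq : X.pathChain α + t • X.edgeChain e = X.pathChain β + u • X.edgeChain f) :
    (f = e ∧ u = t) ∨ (f = X.inv e ∧ u = 1 - t) := by
  obtain ⟨a, ha⟩ := isIntegral_pathChain α e
  obtain ⟨b, hb⟩ := isIntegral_pathChain β e
  have hcoeff := congrArg (fun c : X.C1 => (c : X.E →₀ ℝ) e) heq
  simp only [Submodule.coe_add, Submodule.coe_smul, Finsupp.add_apply, Finsupp.smul_apply,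
    smul_eq_mul, edgeChain_apply_self, mul_one, ha, hb] at hcoeff
  obtain ⟨ht₀, ht₁⟩ := ht
  obtain ⟨hu₀, hu₁⟩ := hu
  by_cases hfe : f = e
  · rw [hfe, edgeChain_apply_self, mul_one] at hcoeff
    have hab : a = b := Int.eq_of_abs_cast_sub_lt_one (R := ℝ)
      (abs_sub_lt_iff.mpr ⟨by linarith, by linarith⟩)
    subst hab
    exact Or.inl ⟨hfe, by linarith⟩
  by_cases hfe' : f = X.inv e
  · rw [hfe', edgeChain_inv_apply_self] at hcoeff
    have hab : a = b - 1 := Int.eq_of_abs_cast_sub_lt_one (R := ℝ)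
      (abs_sub_lt_iff.mpr ⟨by push_cast; linarith, by push_cast; linarith⟩)
    subst hab
    exact Or.inr ⟨hfe', by push_cast at hcoeff; linarith⟩
  rw [edgeChain_apply_of_ne hfe hfe', mul_zero, add_zero] at hcoeff
  have hab : a = b := Int.eq_of_abs_cast_sub_lt_one (R := ℝ)
    (abs_sub_lt_iff.mpr ⟨by linarith, by linarith⟩)
  subst hab
  exact absurd hcoeff (by linarith)

end SunadaGraph

/-- In a connected graph with basepoint `x₀`, if `c_α + t·e = c_β + u·f`
with `t, u ∈ (0,1)`, then either `f = e`, `u = t`, and `α` is homologous to `β`, or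
`f = e⁻¹`, `u = 1 − t`, and `αe` is homologous to `β`. -/
theorem bond_points_representation_unique (X : SunadaGraph) (hconn : X.Connected)
    (x₀ x x' : X.V) (α β : List X.E) (hα : X.IsPath x₀ x α) (hβ : X.IsPath x₀ x' β)
    (e f : X.E) (he : X.s e = x) (hf : X.s f = x')
    (t u : ℝ) (ht : t ∈ Set.Ioo (0:ℝ) 1) (hu : u ∈ Set.Ioo (0:ℝ) 1)
    (heq : X.pathChain α + t • X.edgeChain e = X.pathChain β + u • X.edgeChain f) :
    (f = e ∧ u = t ∧ X.Homologous x₀ x α β) ∨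
    (f = X.inv e ∧ u = 1 - t ∧ X.Homologous x₀ (X.t e) (α ++ [e]) β) := by
  subst he hf
  obtain ⟨rfl, rfl⟩ | ⟨rfl, rfl⟩ :=
    SunadaGraph.eq_and_eq_or_eq_inv_and_eq_one_sub_of_pathChain_add_smul_eq ht hu heq
  · exact Or.inl ⟨rfl, rfl, SunadaGraph.homologous_of_pathChain_eq hconn hα hβ
      (add_right_cancel heq)⟩
  · have hchain : X.pathChain (α ++ [e]) = X.pathChain β := by
      rw [SunadaGraph.edgeChain_inv] at heq
      rw [SunadaGraph.pathChain_append, SunadaGraph.pathChain_cons, SunadaGraph.pathChain_nil]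
      linear_combination (norm := module) heq
    exact Or.inr ⟨rfl, rfl, SunadaGraph.homologous_of_pathChain_eq hconn
      (hα.append (SunadaGraph.isPath_singleton e)) (X.s_inv e ▸ hβ) hchain⟩
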